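/- arXiv:math/9910143 — 5 statements merged into one kernel-verified Lean document; each statement's English description precedes it below -/
import Mathlib

section
/- If f: ℂ → ℂ is an exponential function, then the circulant matrix F corresponding to f satisfies F(x + y) = F(y) F(x) for all x, y ∈ ℂ. -/
/-!
Let `U = (ω^{jk})` and `V = (ω^{-kl}/n)` be the matrices of the discrete Fourier transform and its
inverse. The components `f_j(x)` are the Fourier coefficients of `k ↦ f(ω^k x)`, and `F(x)_{jl}`
only depends on `l - j`, so `F(x) = U D(x) V` with `D(x) = diag(f(ω^k x))_k`. Since `V U = 1` by
the orthogonality of the `n`-th roots of unity, `F(y) F(x) = U D(y) D(x) V`, and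
`D(y) D(x) = D(x + y)` because `f` is exponential.
-/

open Finset

namespace Matrix

variable {K : Type*} [Field K]

def dftMatrix (ζ : K) (n : ℕ) : Matrix (Fin n) (Fin n) K :=
  of fun j k => ζ ^ ((j : ℕ) * (k : ℕ))

def idftMatrix (ζ : K) (n : ℕ) : Matrix (Fin n) (Fin n) K :=
  of fun k l => (n : K)⁻¹ * ζ ^ (-((k : ℕ) * (l : ℕ) : ℤ))

end Matrix

open Matrix (diagonal dftMatrix idftMatrix)

namespace IsPrimitiveRoot

variable {K : Type*} [Field K] {n : ℕ} {ζ : K}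

theorem zpow_eq_zpow_of_modEq [NeZero n] (hζ : IsPrimitiveRoot ζ n) {a b : ℤ}
    (hab : a ≡ b [ZMOD n]) : ζ ^ a = ζ ^ b := by
  have hζ0 : ζ ≠ 0 := hζ.ne_zero (NeZero.ne n)
  rw [← div_eq_one_iff_eq (zpow_ne_zero b hζ0), ← zpow_sub₀ hζ0, hζ.zpow_eq_one_iff_dvd]
  exact hab.symm.dvd

theorem geom_sum_zpow_eq_ite (hζ : IsPrimitiveRoot ζ n) (i : ℤ) :
    ∑ l ∈ range n, (ζ ^ i) ^ l = if (n : ℤ) ∣ i then (n : K) else 0 := by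
  split_ifs with hi
  · obtain ⟨c, rfl⟩ := hi
    simp [zpow_mul, hζ.zpow_eq_one]
  · have hne : ζ ^ i ≠ 1 := by rwa [Ne, hζ.zpow_eq_one_iff_dvd]
    rw [geom_sum_eq hne, ← zpow_natCast, ← zpow_mul, mul_comm, zpow_mul, hζ.zpow_eq_one,
      one_zpow, sub_self, zero_div]

theorem idftMatrix_mul_dftMatrix [NeZero n] (hζ : IsPrimitiveRoot ζ n) :
    idftMatrix ζ n * dftMatrix ζ n = 1 := by
  have hζ0 : ζ ≠ 0 := hζ.ne_zero (NeZero.ne n)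
  ext k m
  have hterm : ∀ l : Fin n, idftMatrix ζ n k l * dftMatrix ζ n l m =
      (n : K)⁻¹ * (ζ ^ ((m : ℤ) - k)) ^ (l : ℕ) := fun l => by
    simp only [idftMatrix, dftMatrix, Matrix.of_apply]
    rw [mul_assoc, ← zpow_natCast, ← zpow_natCast, ← zpow_add₀ hζ0, ← zpow_mul]
    congr 2
    push_cast
    ring
  have hdvd : (n : ℤ) ∣ (m : ℤ) - k ↔ k = m := by
    refine ⟨fun h => ?_, fun h => by simp [h]⟩
    have := Int.eq_zero_of_abs_lt_dvd h (by rw [abs_lt]; omega)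
    exact Fin.ext (by omega)
  rw [Matrix.mul_apply, Matrix.one_apply, sum_congr rfl fun l _ => hterm l, ← mul_sum,
    Fin.sum_univ_eq_sum_range (fun l => (ζ ^ ((m : ℤ) - k)) ^ l), hζ.geom_sum_zpow_eq_ite]
  simp only [hdvd]
  split_ifs
  · exact inv_mul_cancel₀ hζ.neZero'.ne
  · exact mul_zero _

theorem dftMatrix_mul_diagonal_mul_idftMatrix_apply [NeZero n] (hζ : IsPrimitiveRoot ζ n)
    (d : Fin n → K) (j l : Fin n) :
    (dftMatrix ζ n * diagonal d * idftMatrix ζ n) j l =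
      (n : K)⁻¹ * ∑ k : Fin n, ζ ^ (-(((l - j : Fin n) : ℕ) * (k : ℕ) : ℤ)) * d k := by
  have hζ0 : ζ ≠ 0 := hζ.ne_zero (NeZero.ne n)
  rw [Matrix.mul_apply, mul_sum]
  refine sum_congr rfl fun k _ => ?_
  have hperiodic : ζ ^ (-(((l - j : Fin n) : ℕ) * (k : ℕ) : ℤ)) =
      ζ ^ ((j : ℕ) * (k : ℕ)) * ζ ^ (-((k : ℕ) * (l : ℕ) : ℤ)) := by
    rw [← zpow_natCast, ← zpow_add₀ hζ0]
    apply hζ.zpow_eq_zpow_of_modEq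
    rw [Int.modEq_iff_dvd, Fin.intCast_val_sub_eq_sub_add_ite]
    push_cast
    split_ifs
    · exact ⟨0, by ring⟩
    · exact ⟨k, by ring⟩
  simp only [Matrix.mul_diagonal, dftMatrix, idftMatrix, Matrix.of_apply, hperiodic]
  ring

end IsPrimitiveRoot

/-- If `f : ℂ → ℂ` is an exponential function
(`f(x+y) = f(x)f(y)`), then the circulant matrix `F` corresponding to `f`
(formed from the components `f_j(x) = (1/n) Σ_k ω^(−jk) f(ω^k x)`) satisfies
`F(x + y) = F(y) F(x)` for all `x, y ∈ ℂ`. -/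
theorem circulant_of_exponential_is_multiplicative
    (n : ℕ) (hn : 2 ≤ n)
    (ω : ℂ) (hω : ω = Complex.exp (2 * Real.pi * Complex.I / n))
    (f : ℂ → ℂ)
    (hf : ∀ x y : ℂ, f (x + y) = f x * f y)
    (comp : Fin n → ℂ → ℂ)
    (hcomp : ∀ (j : Fin n) (x : ℂ),
      comp j x = (1 / n : ℂ) * ∑ k : Fin n,
        ω ^ (-((j : ℕ) * (k : ℕ) : ℤ)) * f (ω ^ (k : ℕ) * x))
    (F : ℂ → Matrix (Fin n) (Fin n) ℂ)
    (hF : ∀ (x : ℂ) (j k : Fin n), F x j k = comp (k - j) x) :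
    ∀ x y : ℂ, F (x + y) = F y * F x := by
  have : NeZero n := ⟨by omega⟩
  have hprim : IsPrimitiveRoot ω n := hω ▸ Complex.isPrimitiveRoot_exp n (NeZero.ne n)
  let D : ℂ → Matrix (Fin n) (Fin n) ℂ := fun x => diagonal fun k => f (ω ^ (k : ℕ) * x)
  have hFD : ∀ x, F x = dftMatrix ω n * D x * idftMatrix ω n := fun x => by
    ext j l
    rw [hF, hcomp, one_div, hprim.dftMatrix_mul_diagonal_mul_idftMatrix_apply]
  have hD : ∀ x y, D (x + y) = D y * D x := fun x y => by
    simp only [D, Matrix.diagonal_mul_diagonal, mul_add, hf]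
    congr 1
    funext k
    exact mul_comm _ _
  intro x y
  rw [hFD, hFD, hFD, hD]
  simp only [Matrix.mul_assoc]
  rw [← Matrix.mul_assoc (idftMatrix ω n), hprim.idftMatrix_mul_dftMatrix, Matrix.one_mul]
end

section
/- If f: ℂ → ℂ is an exponential function, then the circulant matrix F corresponding to f satisfies F(x + ω^m y) = Ω^{−m} F(y) Ω^{m} F(x) for all x, y ∈ ℂ and every m ∈ {0, 1, …, n−1}, where Ω = diag(1, ω, …, ω^{n−1}). -/
/-- If `f : ℂ → ℂ` is an exponential function, then the circulant
matrix `F` corresponding to `f` satisfies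
`F(x + ω^m y) = Ω^(−m) F(y) Ω^m F(x)` for all `x, y ∈ ℂ` and every
`m ∈ {0, 1, …, n−1}`, where `Ω = diag(1, ω, …, ω^(n−1))`. -/
theorem circulant_of_exponential_addition_formula
    (n : ℕ) (hn : 2 ≤ n)
    (ω : ℂ) (hω : ω = Complex.exp (2 * Real.pi * Complex.I / n))
    (Om : Matrix (Fin n) (Fin n) ℂ)
    (hOm : Om = Matrix.diagonal fun j : Fin n => ω ^ (j : ℕ))
    (f : ℂ → ℂ)
    (hf : ∀ x y : ℂ, f (x + y) = f x * f y)
    (comp : Fin n → ℂ → ℂ)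
    (hcomp : ∀ (j : Fin n) (x : ℂ),
      comp j x = (1 / n : ℂ) * ∑ k : Fin n,
        ω ^ (-((j : ℕ) * (k : ℕ) : ℤ)) * f (ω ^ (k : ℕ) * x))
    (F : ℂ → Matrix (Fin n) (Fin n) ℂ)
    (hF : ∀ (x : ℂ) (j k : Fin n), F x j k = comp (k - j) x) :
    ∀ (m : ℕ), m < n → ∀ x y : ℂ,
      F (x + ω ^ m * y) = Om⁻¹ ^ m * F y * Om ^ m * F x := by
  intro m hm x y
  have hnC : (n : ℂ) ≠ 0 := Nat.cast_ne_zero.mpr (by omega)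
  have hprim : IsPrimitiveRoot ω n := by
    rw [hω]; exact Complex.isPrimitiveRoot_exp n (by omega)
  have hω0 : ω ≠ 0 := hprim.ne_zero (by omega)
  -- periodicity of integer powers of ω
  have hper : ∀ a b : ℤ, (n : ℤ) ∣ (a - b) → ω ^ a = ω ^ b := by
    rintro a b ⟨c, hc⟩
    have ha : a = b + (n : ℤ) * c := by linarith
    rw [ha, zpow_add₀ hω0, zpow_mul, zpow_natCast, hprim.pow_eq_one, one_zpow, mul_one]
  -- orthogonality
  have hortho : ∀ c : ℤ, (∑ l : Fin n, ω ^ ((l : ℤ) * c))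
      = if (n : ℤ) ∣ c then (n : ℂ) else 0 := by
    intro c
    by_cases h : (n : ℤ) ∣ c
    · rw [if_pos h]
      have h1 : ∀ l : Fin n, ω ^ ((l : ℤ) * c) = 1 := by
        intro l
        have := hper ((l : ℤ) * c) 0 (by simpa using h.mul_left (l : ℤ))
        simpa using this
      simp [h1]
    · rw [if_neg h]
      have hx1 : ω ^ c ≠ 1 := fun h1 => h ((hprim.zpow_eq_one_iff_dvd c).mp h1)
      have hxn : (ω ^ c) ^ n = 1 := by
        rw [← zpow_natCast (ω ^ c), ← zpow_mul]
        exact (hprim.zpow_eq_one_iff_dvd _).mpr ⟨c, by ring⟩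
      have h2 : ∀ l : Fin n, ω ^ ((l : ℤ) * c) = (ω ^ c) ^ (l : ℕ) := by
        intro l
        rw [← zpow_natCast (ω ^ c), ← zpow_mul, mul_comm]
      calc (∑ l : Fin n, ω ^ ((l : ℤ) * c)) = ∑ l : Fin n, (ω ^ c) ^ (l : ℕ) :=
            Finset.sum_congr rfl fun l _ => h2 l
        _ = ∑ i ∈ Finset.range n, (ω ^ c) ^ i := Fin.sum_univ_eq_sum_range _ n
        _ = ((ω ^ c) ^ n - 1) / (ω ^ c - 1) := geom_sum_eq hx1 n
        _ = 0 := by rw [hxn]; simp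
  -- Fin subtraction mod n
  have hsub : ∀ a b : Fin n, (n : ℤ) ∣ ((((a - b : Fin n) : ℕ) : ℤ) - ((a : ℤ) - (b : ℤ))) := by
    intro a b
    have hb : (b : ℕ) ≤ n := le_of_lt b.isLt
    have h2 : (((a - b : Fin n) : ℕ) : ℤ) = ((n : ℤ) - b + a) % (n : ℤ) := by
      rw [Fin.sub_def]
      push_cast [hb]
      rfl
    obtain ⟨c, hc⟩ : (n : ℤ) ∣ (((n : ℤ) - b + a) % n - ((n : ℤ) - b + a)) :=
      ⟨-(((n : ℤ) - b + a) / n), by rw [Int.emod_def]; ring⟩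
    exact ⟨c + 1, by rw [h2]; linear_combination hc⟩
  ext j k
  have hLHS : F (x + ω ^ m * y) j k
      = (1 / (n : ℂ)) * ∑ s : Fin n, ω ^ (((j : ℤ) - k) * (s : ℕ)) *
          (f (ω ^ (s : ℕ) * x) * f (ω ^ ((s : ℕ) + (m : ℤ)) * y)) := by
    rw [hF, hcomp]
    congr 1
    apply Finset.sum_congr rfl
    intro s _
    have h1 : ω ^ (s : ℕ) * (x + ω ^ m * y)
        = ω ^ (s : ℕ) * x + ω ^ ((s : ℕ) + (m : ℤ)) * y := by
      rw [zpow_add₀ hω0, zpow_natCast, zpow_natCast]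
      ring
    rw [h1, hf]
    congr 1
    apply hper
    obtain ⟨c, hc⟩ := hsub k j
    exact ⟨-c * s, by linear_combination (-(s : ℤ)) * hc⟩
  have hOmInv : Om⁻¹ = Matrix.diagonal fun l : Fin n => ω ^ (-((l : ℕ) : ℤ)) := by
    apply Matrix.inv_eq_right_inv
    rw [hOm, Matrix.diagonal_mul_diagonal]
    have : (fun l : Fin n => ω ^ (l : ℕ) * ω ^ (-((l : ℕ) : ℤ))) = fun _ => (1 : ℂ) := by
      funext l
      rw [← zpow_natCast ω (l : ℕ), ← zpow_add₀ hω0]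
      simp
    rw [this, Matrix.diagonal_one]
  have hD1 : Om⁻¹ ^ m = Matrix.diagonal fun l : Fin n => ω ^ (-((l : ℕ) : ℤ) * m) := by
    rw [hOmInv, Matrix.diagonal_pow]
    have hfun : ((fun l : Fin n => ω ^ (-((l : ℕ) : ℤ))) ^ m)
        = fun l : Fin n => ω ^ (-((l : ℕ) : ℤ) * m) := by
      funext l
      simp only [Pi.pow_apply]
      rw [← zpow_natCast (ω ^ (-((l : ℕ) : ℤ))) m, ← zpow_mul]
    rw [hfun]
  have hD2 : Om ^ m = Matrix.diagonal fun l : Fin n => ω ^ (((l : ℕ) : ℤ) * m) := by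
    rw [hOm, Matrix.diagonal_pow]
    have hfun : ((fun l : Fin n => ω ^ (l : ℕ)) ^ m)
        = fun l : Fin n => ω ^ (((l : ℕ) : ℤ) * m) := by
      funext l
      simp only [Pi.pow_apply]
      rw [← zpow_natCast ω (l : ℕ), ← zpow_natCast (ω ^ (((l : ℕ) : ℤ))) m, ← zpow_mul]
    rw [hfun]
  rw [hLHS, hD1, hD2, Matrix.mul_apply]
  simp only [Matrix.mul_diagonal, Matrix.diagonal_mul, hF, hcomp]
  symm
  have key2 : ∀ (A B C D E : ℤ) (u v : ℂ), A + B + C + D = E →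
      ω ^ A * (1/(n:ℂ) * (ω ^ B * u)) * ω ^ C * (1/(n:ℂ) * (ω ^ D * v))
        = 1/(n:ℂ) * (1/(n:ℂ) * (ω ^ E * (u * v))) := by
    intro A B C D E u v h
    rw [← h, zpow_add₀ hω0, zpow_add₀ hω0, zpow_add₀ hω0]
    ring
  trans (∑ l : Fin n, ∑ s : Fin n, ∑ t : Fin n, (1/(n:ℂ)) * ((1/(n:ℂ)) *
      (ω ^ ((((l : ℕ) : ℤ)) * ((m : ℤ) + ((s : ℕ) : ℤ) - ((t : ℕ) : ℤ))
          + (-(((j : ℕ) : ℤ)) * m + ((j : ℕ) : ℤ) * ((t : ℕ) : ℤ) - ((k : ℕ) : ℤ) * ((s : ℕ) : ℤ)))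
        * (f (ω ^ (t : ℕ) * y) * f (ω ^ (s : ℕ) * x)))))
  · apply Finset.sum_congr rfl
    intro l _
    simp only [Finset.mul_sum, Finset.sum_mul]
    apply Finset.sum_congr rfl
    intro s _
    apply Finset.sum_congr rfl
    intro t _
    have e1 : ω ^ (-((((l - j : Fin n) : ℕ) : ℤ) * ((t : ℕ) : ℤ)))
        = ω ^ ((((j : ℕ) : ℤ) - ((l : ℕ) : ℤ)) * ((t : ℕ) : ℤ)) := by
      obtain ⟨c, hc⟩ := hsub l j
      exact hper _ _ ⟨-c * t, by linear_combination (-((t : ℕ) : ℤ)) * hc⟩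
    have e2 : ω ^ (-((((k - l : Fin n) : ℕ) : ℤ) * ((s : ℕ) : ℤ)))
        = ω ^ ((((l : ℕ) : ℤ) - ((k : ℕ) : ℤ)) * ((s : ℕ) : ℤ)) := by
      obtain ⟨c, hc⟩ := hsub k l
      exact hper _ _ ⟨-c * s, by linear_combination (-((s : ℕ) : ℤ)) * hc⟩
    rw [e1, e2]
    exact key2 _ _ _ _ _ _ _ (by ring)
  · -- reorder sums and collapse
    set t0 : Fin n → Fin n := fun s => (⟨m, hm⟩ : Fin n) + s with ht0def
    have ht0val : ∀ s : Fin n, (((t0 s : Fin n) : ℕ) : ℤ) = ((m : ℤ) + ((s : ℕ) : ℤ)) % (n : ℤ) := by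
      intro s
      have h1 : ((t0 s : Fin n) : ℕ) = (m + (s : ℕ)) % n := by
        rw [ht0def]
        simp [Fin.add_def]
      rw [h1]
      push_cast
      rfl
    have ht0dvd : ∀ s : Fin n, (n : ℤ) ∣ ((m : ℤ) + ((s : ℕ) : ℤ) - (((t0 s : Fin n) : ℕ) : ℤ)) := by
      intro s
      refine ⟨((m : ℤ) + ((s : ℕ) : ℤ)) / n, ?_⟩
      rw [ht0val, Int.emod_def]
      ring
    have ht0uniq : ∀ s t : Fin n,
        (n : ℤ) ∣ ((m : ℤ) + ((s : ℕ) : ℤ) - ((t : ℕ) : ℤ)) → t = t0 s := by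
      rintro s t ⟨c, hc⟩
      have h1 : ((m : ℤ) + ((s : ℕ) : ℤ)) % (n : ℤ) = ((t : ℕ) : ℤ) := by
        rw [show (m : ℤ) + ((s : ℕ) : ℤ) = ((t : ℕ) : ℤ) + (n : ℤ) * c by linarith,
          Int.add_mul_emod_self_left,
          Int.emod_eq_of_lt (Int.natCast_nonneg _) (by exact_mod_cast t.isLt)]
      have h2 : ((t : ℕ) : ℤ) = (((t0 s : Fin n) : ℕ) : ℤ) := by rw [ht0val, h1]
      exact Fin.ext (by exact_mod_cast h2)
    rw [Finset.sum_comm]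
    rw [Finset.mul_sum]
    apply Finset.sum_congr rfl
    intro s _
    rw [Finset.sum_comm]
    trans (∑ t : Fin n, (1/(n:ℂ)) * ((1/(n:ℂ)) *
        ((if (n : ℤ) ∣ ((m : ℤ) + ((s : ℕ) : ℤ) - ((t : ℕ) : ℤ)) then (n : ℂ) else 0) *
          (ω ^ (-(((j : ℕ) : ℤ)) * m + ((j : ℕ) : ℤ) * ((t : ℕ) : ℤ) - ((k : ℕ) : ℤ) * ((s : ℕ) : ℤ)) *
            (f (ω ^ (t : ℕ) * y) * f (ω ^ (s : ℕ) * x))))))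
    · apply Finset.sum_congr rfl
      intro t _
      rw [← hortho ((m : ℤ) + ((s : ℕ) : ℤ) - ((t : ℕ) : ℤ))]
      rw [Finset.sum_mul]
      simp only [Finset.mul_sum]
      apply Finset.sum_congr rfl
      intro l _
      rw [zpow_add₀ hω0]
      ring
    · rw [Finset.sum_eq_single_of_mem (t0 s) (Finset.mem_univ (t0 s))
        (fun t _ hne => by rw [if_neg (fun hdvd => hne (ht0uniq s t hdvd))]; ring)]
      rw [if_pos (ht0dvd s)]
      have e3 : ω ^ (-(((j : ℕ) : ℤ)) * m + ((j : ℕ) : ℤ) * (((t0 s : Fin n) : ℕ) : ℤ) - ((k : ℕ) : ℤ) * ((s : ℕ) : ℤ))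
          = ω ^ ((((j : ℕ) : ℤ) - ((k : ℕ) : ℤ)) * ((s : ℕ) : ℤ)) := by
        obtain ⟨c, hc⟩ := ht0dvd s
        exact hper _ _ ⟨-((j : ℕ) : ℤ) * c, by linear_combination (-((j : ℕ) : ℤ)) * hc⟩
      have e4 : ω ^ ((t0 s : Fin n) : ℕ) = ω ^ (((s : ℕ) : ℤ) + (m : ℤ)) := by
        rw [← zpow_natCast ω ((t0 s : Fin n) : ℕ)]
        obtain ⟨c, hc⟩ := ht0dvd s
        exact hper _ _ ⟨-c, by linear_combination -hc⟩
      rw [e3, e4]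
      field_simp
end

section
/- Let F(x) be an n×n circulant matrix function of a complex variable, and let m ∈ {0,1,…,n−1} be fixed with gcd(n, m) = 1. If F satisfies F(x + ω^m y) = Ω^{−m} F(y) Ω^{m} F(x) for all x, y ∈ ℂ, then for every m' ∈ {0,1,…,n−1}, F also satisfies F(x + ω^{m'} y) = Ω^{−m'} F(y) Ω^{m'} F(x) for all x, y ∈ ℂ. -/
open Fin.NatCast Fin.CommRing in
private lemma circ_scalar_key {n : ℕ} [NeZero n] (χ : Fin n → ℂ)
    (χadd : ∀ a b : Fin n, χ (a + b) = χ a * χ b)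
    (χne : ∀ a : Fin n, χ a ≠ 0)
    (g : Fin n → ℂ → ℂ) (m c : Fin n) (hc : m * c = 1)
    (hg : ∀ (j : Fin n) (x y : ℂ), g j (x + χ m * y) = g (j + m) y * g j x) :
    ∀ (m' j : Fin n) (x y : ℂ),
      g j (x + χ m' * y) = g (j + m') y * g j x := by
  by_cases hz : ∃ j x, g j x = 0
  · obtain ⟨j0, x0, h0⟩ := hz
    have hj0 : ∀ z, g j0 z = 0 := by
      intro z
      have h1 := hg j0 x0 ((z - x0) / χ m)
      rw [mul_div_cancel₀ _ (χne m), add_sub_cancel] at h1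
      rw [h1, h0, mul_zero]
    have hdown : ∀ (j : Fin n), (∀ z, g j z = 0) → ∀ z, g (j - m) z = 0 := by
      intro j hj z
      have h1 := hg (j - m) z 0
      rw [mul_zero, add_zero, sub_add_cancel] at h1
      rw [h1, hj 0, zero_mul]
    have hiter : ∀ k : ℕ, ∀ z, g (j0 - (k : Fin n) * m) z = 0 := by
      intro k
      induction k with
      | zero => simpa using hj0
      | succ k ih =>
        have h1 := hdown _ ih
        intro z
        have h2 := h1 z
        have e : j0 - (k : Fin n) * m - m = j0 - ((k + 1 : ℕ) : Fin n) * m := by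
          push_cast
          ring
        rwa [e] at h2
    have hall : ∀ (j : Fin n) (x : ℂ), g j x = 0 := by
      intro j x
      have hk : j0 - (((j0 - j) * c : Fin n) : ℕ) * m = j := by
        rw [Fin.cast_val_eq_self, mul_assoc, mul_comm c m, hc, mul_one, sub_sub_cancel]
      have h1 := hiter (((j0 - j) * c : Fin n) : ℕ) x
      rwa [hk] at h1
    intro m' j x y
    rw [hall, hall, hall, zero_mul]
  · push_neg at hz
    have h0 : ∀ j, g j 0 = 1 := by
      intro j
      have h1 := hg (j - m) 0 0
      rw [mul_zero, add_zero, sub_add_cancel] at h1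
      apply mul_right_cancel₀ (hz (j - m) 0)
      rw [one_mul, ← h1]
    have hstep : ∀ (j : Fin n) (y : ℂ), g (j + m) y = g j (χ m * y) := by
      intro j y
      have h1 := hg j 0 y
      rw [zero_add, h0 j, mul_one] at h1
      exact h1.symm
    have hmult : ∀ (j : Fin n) (x z : ℂ), g j (x + z) = g j z * g j x := by
      intro j x z
      have h1 := hg j x (z / χ m)
      rw [mul_div_cancel₀ _ (χne m)] at h1
      rw [h1, hstep, mul_div_cancel₀ _ (χne m)]
    have χ0 : χ 0 = 1 := by
      apply mul_left_cancel₀ (χne 0)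
      rw [mul_one, ← χadd, add_zero]
    have hiter : ∀ (k : ℕ) (j : Fin n) (y : ℂ),
        g (j + (k : Fin n) * m) y = g j (χ ((k : Fin n) * m) * y) := by
      intro k
      induction k with
      | zero => intro j y; simp [χ0]
      | succ k ih =>
        intro j y
        have e : ((k + 1 : ℕ) : Fin n) * m = (k : Fin n) * m + m := by
          push_cast
          ring
        rw [e, ← add_assoc, hstep, ih, χadd, mul_assoc]
    intro m' j x y
    have hk : (((m' * c : Fin n) : ℕ) : Fin n) * m = m' := by
      rw [Fin.cast_val_eq_self, mul_assoc, mul_comm c m, hc, mul_one]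
    have h4 := hiter ((m' * c : Fin n) : ℕ) j y
    rw [hk] at h4
    rw [hmult j x (χ m' * y), h4]


/-- Let `F(x)` be an `n × n` circulant matrix function of a complex
variable, and let `m ∈ {0,…,n−1}` be fixed with `gcd(n,m) = 1`. If `F` satisfies
`F(x + ω^m y) = Ω^(−m) F(y) Ω^m F(x)` for all `x, y ∈ ℂ`, then for every
`m' ∈ {0,…,n−1}`, `F` also satisfies `F(x + ω^{m'} y) = Ω^(−m') F(y) Ω^{m'} F(x)`
for all `x, y ∈ ℂ`. -/
theorem circulant_equation_coprime_case_holds_for_all_m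
    (n : ℕ) (hn : 2 ≤ n)
    (ω : ℂ) (hω : ω = Complex.exp (2 * Real.pi * Complex.I / n))
    (Om : Matrix (Fin n) (Fin n) ℂ)
    (hOm : Om = Matrix.diagonal fun j : Fin n => ω ^ (j : ℕ))
    (f : Fin n → ℂ → ℂ)
    (F : ℂ → Matrix (Fin n) (Fin n) ℂ)
    (hF : ∀ (x : ℂ) (j k : Fin n), F x j k = f (k - j) x)
    (m : ℕ) (hm : m < n) (hcop : Nat.gcd n m = 1)
    (heq : ∀ x y : ℂ, F (x + ω ^ m * y) = Om⁻¹ ^ m * F y * Om ^ m * F x) :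
    ∀ (m' : ℕ), m' < n → ∀ x y : ℂ,
      F (x + ω ^ m' * y) = Om⁻¹ ^ m' * F y * Om ^ m' * F x := by
  haveI : NeZero n := ⟨by omega⟩
  open Fin.NatCast Fin.CommRing in
  have hprim : IsPrimitiveRoot ω n := hω ▸ Complex.isPrimitiveRoot_exp n (by omega)
  have hω0 : ω ≠ 0 := by rw [hω]; exact Complex.exp_ne_zero _
  have hωn : ω ^ n = 1 := hprim.pow_eq_one
  have hmod : ∀ a : ℕ, ω ^ (a % n) = ω ^ a := by
    intro a
    conv_rhs => rw [← Nat.div_add_mod a n]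
    rw [pow_add, pow_mul, hωn, one_pow, one_mul]
  set χ : Fin n → ℂ := fun a => ω ^ (a : ℕ) with hχ
  have χadd : ∀ a b : Fin n, χ (a + b) = χ a * χ b := by
    intro a b
    simp only [hχ, Fin.val_add]
    rw [hmod, pow_add]
  have χne : ∀ a : Fin n, χ a ≠ 0 := fun a => pow_ne_zero _ hω0
  have χnat : ∀ k : ℕ, χ (k : Fin n) = ω ^ k := by
    intro k
    simp only [hχ, Fin.val_natCast]
    exact hmod k
  have χpow : ∀ (a : Fin n) (t : ℕ), χ a ^ t = χ ((t : Fin n) * a) := by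
    intro a t
    simp only [hχ, Fin.val_mul, Fin.val_natCast]
    conv_rhs => rw [hmod, pow_mul, hmod, ← pow_mul, mul_comm, pow_mul]
  have χ0 : χ 0 = 1 := by simp [hχ]
  set v : Fin n → Fin n → ℂ := fun j k => χ (j * k) with hv
  set g : Fin n → ℂ → ℂ := fun j x => ∑ k : Fin n, f k x * χ (j * k) with hgdef
  -- F acts on v j as scalar g j x
  have hFv : ∀ (x : ℂ) (j : Fin n), (F x).mulVec (v j) = g j x • v j := by
    intro x j
    funext r
    simp only [Matrix.mulVec, dotProduct, hv, Pi.smul_apply,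
      smul_eq_mul, hgdef]
    rw [Finset.sum_mul, ← Equiv.sum_comp (Equiv.addRight r)
      (fun k => F x r k * χ (j * k))]
    apply Finset.sum_congr rfl
    intro s _
    simp only [Equiv.coe_addRight]
    rw [hF, add_sub_cancel_right, mul_add, χadd, mul_assoc]
  have hOminv : Om⁻¹ = Matrix.diagonal (fun a : Fin n => χ (-a)) := by
    apply Matrix.inv_eq_right_inv
    rw [hOm, Matrix.diagonal_mul_diagonal]
    have e : (fun i : Fin n => ω ^ (i : ℕ) * χ (-i)) = fun _ => (1 : ℂ) := by
      funext a
      have : ω ^ (a : ℕ) = χ a := rfl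
      rw [this, ← χadd, add_neg_cancel, χ0]
    rw [e, Matrix.diagonal_one]
  have hOmpowv : ∀ (t : ℕ) (j : Fin n),
      (Om ^ t).mulVec (v j) = v (j + (t : Fin n)) := by
    intro t j
    funext k
    rw [hOm, Matrix.diagonal_pow]
    rw [Matrix.mulVec_diagonal]
    simp only [Pi.pow_apply, hv]
    have e1 : (ω ^ (k : ℕ)) ^ t = χ ((t : Fin n) * k) := χpow k t
    rw [e1, ← χadd]
    congr 1
    ring
  have hOminvpowv : ∀ (t : ℕ) (j : Fin n),
      (Om⁻¹ ^ t).mulVec (v j) = v (j - (t : Fin n)) := by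
    intro t j
    funext k
    rw [hOminv, Matrix.diagonal_pow, Matrix.mulVec_diagonal]
    simp only [Pi.pow_apply, hv]
    rw [χpow, ← χadd]
    congr 1
    ring
  -- RHS action
  have hRHS : ∀ (t : ℕ) (j : Fin n) (x y : ℂ),
      (Om⁻¹ ^ t * F y * Om ^ t * F x).mulVec (v j)
        = (g (j + (t : Fin n)) y * g j x) • v j := by
    intro t j x y
    rw [← Matrix.mulVec_mulVec, ← Matrix.mulVec_mulVec, ← Matrix.mulVec_mulVec]
    rw [hFv x j, Matrix.mulVec_smul, hOmpowv, Matrix.mulVec_smul, hFv y,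
      Matrix.mulVec_smul, Matrix.mulVec_smul, hOminvpowv, add_sub_cancel_right,
      smul_smul, mul_comm (g j x)]
  -- extensionality via Vandermonde
  have hext : ∀ A B : Matrix (Fin n) (Fin n) ℂ,
      (∀ j, A.mulVec (v j) = B.mulVec (v j)) → A = B := by
    intro A B h
    set V : Matrix (Fin n) (Fin n) ℂ := Matrix.of (fun k j => v j k) with hVdef
    have hAV : A * V = B * V := by
      ext i j
      have h1 := congrFun (h j) i
      simpa [Matrix.mul_apply, Matrix.mulVec, dotProduct,
        hVdef] using h1
    have hdet : IsUnit V.det := by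
      have hVv : V = Matrix.vandermonde (fun i : Fin n => χ i) := by
        funext k j
        simp only [hVdef, Matrix.of_apply, Matrix.vandermonde, hv]
        rw [χpow, Fin.cast_val_eq_self, mul_comm]
      rw [hVv, Matrix.det_vandermonde, isUnit_iff_ne_zero]
      apply Finset.prod_ne_zero_iff.mpr
      intro i _
      apply Finset.prod_ne_zero_iff.mpr
      intro j hj
      rw [sub_ne_zero]
      intro hcontra
      have : (j : ℕ) = (i : ℕ) := hprim.pow_inj j.isLt i.isLt hcontra
      have : j = i := Fin.ext this
      rw [Finset.mem_Ioi] at hj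
      exact absurd this (ne_of_gt hj)
    calc A = A * (V * V⁻¹) := by rw [Matrix.mul_nonsing_inv V hdet, Matrix.mul_one]
      _ = (A * V) * V⁻¹ := by rw [Matrix.mul_assoc]
      _ = (B * V) * V⁻¹ := by rw [hAV]
      _ = B * (V * V⁻¹) := by rw [Matrix.mul_assoc]
      _ = B := by rw [Matrix.mul_nonsing_inv V hdet, Matrix.mul_one]
  -- scalar equation from hypothesis
  have hscal : ∀ (j : Fin n) (x y : ℂ),
      g j (x + χ (m : Fin n) * y) = g (j + (m : Fin n)) y * g j x := by
    intro j x y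
    have h1 := congrArg (fun A => A.mulVec (v j)) (heq x y)
    rw [hFv, hRHS m j x y] at h1
    have h2 := congrFun h1 0
    simp only [Pi.smul_apply, hv, mul_zero, χ0, smul_eq_mul, mul_one] at h2
    rw [χnat]
    exact h2
  -- inverse of m in Fin n
  obtain ⟨c, hc⟩ : ∃ c : Fin n, (m : Fin n) * c = 1 := by
    refine ⟨((Nat.gcdB n m : ℤ) : Fin n), ?_⟩
    have hb := Nat.gcd_eq_gcd_ab n m
    rw [hcop] at hb
    have h1 := congrArg (fun z : ℤ => ((z : ℤ) : Fin n)) hb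
    push_cast at h1
    rw [Fin.natCast_self, zero_mul, zero_add] at h1
    exact h1.symm
  have hkey := circ_scalar_key χ χadd χne g (m : Fin n) c hc hscal
  intro m' hm' x y
  apply hext
  intro j
  rw [hFv, hRHS m' j x y]
  have hs : g j (x + ω ^ m' * y) = g (j + (m' : Fin n)) y * g j x := by
    rw [← χnat m']
    exact hkey (m' : Fin n) j x y
  rw [hs]
end

section
/- Let n ≥ 2, let m ∈ {0,1,…,n−1} with gcd(n, m) = 1, and let g_0, g_1, …, g_{n−1}: ℂ → ℂ satisfy g_j(x + ω^m y) = g_{(j+m) mod n}(y) · g_j(x) for all x, y ∈ ℂ and all j ∈ {0,…,n−1}. Then either every g_j is identically 0, or g_0 is an exponential function and g_k(y) = g_0(ω^k y) for all y ∈ ℂ and all k ∈ {0,…,n−1}. -/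
/-- Let `n ≥ 2`, let `m ∈ {0,…,n−1}` with `gcd(n,m) = 1`, and let
`g₀, …, g_{n−1} : ℂ → ℂ` satisfy `g_j(x + ω^m y) = g_{(j+m) mod n}(y) · g_j(x)`
for all `x, y` and all `j`. Then either every `g_j` is identically `0`, or `g₀`
is an exponential function and `g_k(y) = g₀(ω^k y)` for all `y` and all `k`. -/
theorem system_solution_all_zero_or_single_exponential
    (n : ℕ) (hn : 2 ≤ n)
    (ω : ℂ) (hω : ω = Complex.exp (2 * Real.pi * Complex.I / n))
    (m : ℕ) (hm : m < n) (hcop : Nat.gcd n m = 1)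
    (g : Fin n → ℂ → ℂ)
    (hg : ∀ (j : Fin n) (x y : ℂ),
      g j (x + ω ^ m * y) = g (j + ⟨m, hm⟩) y * g j x) :
    (∀ (j : Fin n) (x : ℂ), g j x = 0) ∨
    ((∀ x y : ℂ, g ⟨0, by omega⟩ (x + y) = g ⟨0, by omega⟩ x * g ⟨0, by omega⟩ y) ∧
     (∀ (k : Fin n) (y : ℂ), g k y = g ⟨0, by omega⟩ (ω ^ (k : ℕ) * y))) := by
  haveI : NeZero n := ⟨by omega⟩
  have hn0 : (0:ℕ) < n := by omega
  set mf : Fin n := ⟨m, hm⟩ with hmf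
  have hz : (⟨0, hn0⟩ : Fin n) = 0 := by ext; simp
  -- ω basics
  have hωne : ω ≠ 0 := by rw [hω]; exact Complex.exp_ne_zero _
  have hncne : (n:ℂ) ≠ 0 := Nat.cast_ne_zero.mpr (by omega)
  have hωn : ω ^ n = 1 := by
    have h : (n:ℂ) * (2 * Real.pi * Complex.I / n) = 2 * Real.pi * Complex.I := by
      field_simp
    rw [hω, ← Complex.exp_nat_mul, h, Complex.exp_two_pi_mul_I]
  have hpowmod : ∀ a : ℕ, ω ^ a = ω ^ (a % n) := by
    intro a
    conv_lhs => rw [← Nat.div_add_mod a n]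
    rw [pow_add, pow_mul, hωn, one_pow, one_mul]
  -- nsmul of mf
  have hcast : ∀ k : ℕ, ((k • mf : Fin n) : ℕ) = (k * m) % n := by
    intro k
    open Fin.NatCast in
    have h1 : mf = ((m : ℕ) : Fin n) := by ext; simp [hmf, Nat.mod_eq_of_lt hm]
    open Fin.NatCast Fin.CommRing in
    rw [h1, nsmul_eq_mul, ← Nat.cast_mul, Fin.val_natCast]
  -- surjectivity of k ↦ (k+1) • mf
  obtain ⟨a, ha⟩ : ∃ a, m * a % n = 1 :=
    by obtain ⟨a, -, h⟩ := Nat.exists_mul_mod_eq_one_of_coprime (Nat.coprime_comm.mp hcop) (by omega); exact ⟨a, h⟩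
  have surj : ∀ c : Fin n, ∃ k : ℕ, (k + 1) • mf = c := by
    intro c
    refine ⟨a * (c : ℕ) + n - 1, ?_⟩
    have hk1 : a * (c : ℕ) + n - 1 + 1 = a * (c : ℕ) + n := by omega
    apply Fin.ext
    rw [hcast, hk1]
    have h2 : (a * (c : ℕ) + n) * m = (c : ℕ) * (m * a) + n * m := by ring
    rw [h2, Nat.add_mul_mod_self_left, Nat.mul_mod, ha]
    simp [Nat.mod_eq_of_lt c.isLt]
  -- basic consequences of hg
  have prop1 : ∀ j : Fin n, (∃ x, g j x ≠ 0) → g (j + mf) 0 = 1 := by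
    rintro j ⟨x, hx⟩
    have h := hg j x 0
    rw [mul_zero, add_zero] at h
    have h2 : g (j + mf) 0 * g j x = 1 * g j x := by rw [one_mul]; exact h.symm
    exact mul_right_cancel₀ hx h2
  by_cases hall : ∀ (j : Fin n) (x : ℂ), g j x = 0
  · exact Or.inl hall
  right
  push_neg at hall
  obtain ⟨j₀, x₀, hx₀⟩ := hall
  have hone : ∀ k : ℕ, g (j₀ + (k + 1) • mf) 0 = 1 := by
    intro k
    induction k with
    | zero => simpa using prop1 j₀ ⟨x₀, hx₀⟩
    | succ k ih =>
      have h := prop1 (j₀ + (k + 1) • mf) ⟨0, by rw [ih]; exact one_ne_zero⟩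
      rw [add_assoc] at h
      rw [succ_nsmul]
      exact h
  have hall0 : ∀ j : Fin n, g j 0 = 1 := by
    intro j
    obtain ⟨k, hk⟩ := surj (j - j₀)
    have h : j₀ + (k + 1) • mf = j := by rw [hk]; exact add_sub_cancel j₀ j
    rw [← h]; exact hone k
  have shift : ∀ (j : Fin n) (y : ℂ), g (j + mf) y = g j (ω ^ m * y) := by
    intro j y
    have h := hg j 0 y
    rw [zero_add, hall0 j, mul_one] at h
    exact h.symm
  -- exponential property
  have hexp : ∀ x y : ℂ, g 0 (x + y) = g 0 x * g 0 y := by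
    intro x y
    have hmne : ω ^ m ≠ 0 := pow_ne_zero _ hωne
    have h := hg 0 x (y / ω ^ m)
    rw [mul_div_cancel₀ y hmne] at h
    rw [shift 0 (y / ω ^ m), mul_div_cancel₀ y hmne] at h
    rw [h, mul_comm]
  -- iteration
  have iter : ∀ (k : ℕ) (y : ℂ), g ((0 : Fin n) + k • mf) y = g 0 (ω ^ (k * m) * y) := by
    intro k
    induction k with
    | zero => intro y; simp
    | succ k ih =>
      intro y
      rw [succ_nsmul, ← add_assoc, shift, ih]
      congr 1
      rw [← mul_assoc, ← pow_add]
      ring_nf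
  have hgk : ∀ (k : Fin n) (y : ℂ), g k y = g 0 (ω ^ (k : ℕ) * y) := by
    intro k y
    obtain ⟨t, ht⟩ := surj k
    have h1 : g ((0 : Fin n) + (t + 1) • mf) y = g 0 (ω ^ ((t + 1) * m) * y) := iter (t + 1) y
    rw [ht, zero_add] at h1
    rw [h1, hpowmod ((t + 1) * m), ← hcast (t + 1), ht]
  rw [hz]
  exact ⟨hexp, hgk⟩
end

section
/- Let n ≥ 2, let m ∈ {0,1,…,n−1} be fixed, let d = gcd(n, m) (with gcd(n,0) = n), and let F(x) = circ(f_0(x),…,f_{n−1}(x)) be a circulant matrix function satisfying F(x + ω^m y) = Ω^{−m} F(y) Ω^{m} F(x) for all x, y ∈ ℂ. Then there exist exponential functions g_0, g_1, …, g_{d−1}: ℂ → ℂ such that, defining g_{(r+km) mod n}(x) = g_r(ω^{km} x) for r ∈ {0,…,d−1} and k ∈ {0,…,n/d−1}, one has f_j(x) = (1/n) Σ_{l=0}^{n−1} ω^{−jl} g_l(x) for every j ∈ {0,…,n−1} and every x ∈ ℂ. -/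
/-!
Reading the functional equation in the first row of the circulant matrices gives the convolution
identity `f k (x + ω^m y) = ∑ p, ω^(p m) f p y * f (k - p) x`, so the discrete Fourier transforms
`G l = ∑ j, ω^(j l) f j` satisfy `G l (x + ω^m y) = G (l + m) y * G l x`. Along the chain
`l, l + m, l + 2m, …`, which is periodic modulo `n`, either every `G` vanishes identically or
every `G` takes the value `1` at `0`; in the latter case `G (l + m) y = G l (ω^m y)` and `G l` is
exponential. Fourier inversion recovers `f` from `G`.
-/

open Finset

section DFT

variable {K : Type*} [Field K] {n : ℕ} {ζ : K}

/-- The frequency `l` ranges over `ℕ`; for `ζ ^ n = 1` the transform is `n`-periodic in it. -/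
def finDFT (ζ : K) (a : Fin n → K) (l : ℕ) : K :=
  ∑ j : Fin n, ζ ^ ((j : ℕ) * l) * a j

theorem finDFT_mod (hζ : ζ ^ n = 1) (a : Fin n → K) (l : ℕ) :
    finDFT ζ a (l % n) = finDFT ζ a l := by
  refine sum_congr rfl fun j _ => ?_
  rw [pow_mul, pow_mul, ← pow_eq_pow_mod l (by rw [← pow_mul, mul_comm, pow_mul, hζ, one_pow])]

theorem finDFT_pow_mul (a : Fin n → K) (m l : ℕ) :
    finDFT ζ (fun p => ζ ^ ((p : ℕ) * m) * a p) l = finDFT ζ a (l + m) := by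
  refine sum_congr rfl fun j _ => ?_
  rw [mul_add, pow_add, mul_assoc]

theorem pow_val_add_mul_of_pow_eq_one [NeZero n] (hζ : ζ ^ n = 1) (p q : Fin n) (l : ℕ) :
    ζ ^ (((p + q : Fin n) : ℕ) * l) = ζ ^ ((p : ℕ) * l) * ζ ^ ((q : ℕ) * l) := by
  rw [← pow_add, ← add_mul, pow_mul, pow_mul, Fin.val_add, ← pow_eq_pow_mod _ hζ]

theorem finDFT_convolution [NeZero n] (hζ : ζ ^ n = 1) (a b : Fin n → K) (l : ℕ) :
    finDFT ζ (fun k => ∑ p, a p * b (k - p)) l = finDFT ζ a l * finDFT ζ b l := by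
  rw [finDFT, finDFT, finDFT, sum_mul_sum]
  simp_rw [mul_sum]
  rw [sum_comm]
  refine sum_congr rfl fun p _ => Fintype.sum_equiv (Equiv.subRight p) _ _ fun k => ?_
  rw [Equiv.subRight_apply]
  conv_lhs => rw [← sub_add_cancel k p, add_comm, pow_val_add_mul_of_pow_eq_one hζ]
  rw [add_sub_cancel_left]
  ring

open Classical in
theorem sum_fin_pow_eq_ite {R : Type*} [CommRing R] [IsDomain R] {z : R} (hz : z ^ n = 1) :
    ∑ l : Fin n, z ^ (l : ℕ) = if z = 1 then (n : R) else 0 := by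
  rw [Fin.sum_univ_eq_sum_range (z ^ ·)]
  split_ifs with h
  · simp [h]
  · have := geom_sum_mul z n
    rw [hz, sub_self] at this
    exact (mul_eq_zero.1 this).resolve_right (sub_ne_zero.2 h)

theorem finDFT_inversion [NeZero n] (hζ : IsPrimitiveRoot ζ n) (a : Fin n → K) (j : Fin n) :
    a j = (1 / n : K) * ∑ l : Fin n, ζ ^ (-((j : ℕ) * (l : ℕ) : ℤ)) * finDFT ζ a l := by
  have hζ0 : ζ ≠ 0 := hζ.ne_zero (NeZero.ne n)
  have := hζ.neZero'
  have hterm : ∀ l : Fin n, ζ ^ (-((j : ℕ) * (l : ℕ) : ℤ)) * finDFT ζ a l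
      = ∑ i : Fin n, (ζ ^ (i : ℕ) / ζ ^ (j : ℕ)) ^ (l : ℕ) * a i := fun l => by
    rw [finDFT, mul_sum]
    refine sum_congr rfl fun i _ => ?_
    rw [zpow_neg, ← Nat.cast_mul, zpow_natCast, div_pow, ← pow_mul, ← pow_mul]
    ring
  have horth : ∀ i : Fin n, ∑ l : Fin n, (ζ ^ (i : ℕ) / ζ ^ (j : ℕ)) ^ (l : ℕ)
      = if i = j then (n : K) else 0 := fun i => by
    classical
    rw [sum_fin_pow_eq_ite (by rw [div_pow, ← pow_mul, ← pow_mul, mul_comm, pow_mul, hζ.pow_eq_one,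
      mul_comm, pow_mul, hζ.pow_eq_one, one_pow, one_pow, div_one])]
    refine if_congr ?_ rfl rfl
    rw [div_eq_one_iff_eq (pow_ne_zero _ hζ0), Fin.ext_iff]
    exact ⟨fun h => hζ.pow_inj i.isLt j.isLt h, congrArg _⟩
  simp_rw [hterm]
  rw [sum_comm]
  simp_rw [← sum_mul, horth, ite_mul, zero_mul, sum_ite_eq', mem_univ, if_true]
  rw [one_div, inv_mul_cancel_left₀ (NeZero.ne _)]

end DFT

section Chain

variable {K : Type*} [Field K] {c : K} {H : ℕ → K → K}

theorem map_zero_eq_one_of_ne_zero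
    (hH : ∀ k x y, H k (x + c * y) = H (k + 1) y * H k x) {k : ℕ} {x : K} (hx : H k x ≠ 0) :
    H (k + 1) 0 = 1 :=
  mul_eq_right₀ hx |>.1 (by simpa using (hH k x 0).symm)

theorem forall_eq_zero_or_forall_map_zero_eq_one
    (hH : ∀ k x y, H k (x + c * y) = H (k + 1) y * H k x) {N : ℕ} (hN : 0 < N)
    (hper : Function.Periodic H N) :
    (∀ k x, H k x = 0) ∨ ∀ k, H k 0 = 1 := by
  refine or_iff_not_imp_left.2 fun hne => ?_
  obtain ⟨k₀, x₀, hx₀⟩ : ∃ k x, H k x ≠ 0 := by simpa using hne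
  have hfwd : ∀ t, H (k₀ + 1 + t) 0 = 1 := by
    intro t
    induction t with
    | zero => exact map_zero_eq_one_of_ne_zero hH hx₀
    | succ t ih =>
      exact map_zero_eq_one_of_ne_zero hH (k := k₀ + 1 + t) (x := 0) (by simp [ih])
  intro k
  -- move `k` forward by whole periods until it lies beyond `k₀`
  have hk : k + (k₀ + 1) * N = k₀ + 1 + (k + (k₀ + 1) * N - (k₀ + 1)) := by
    have := Nat.le_mul_of_pos_right (k₀ + 1) hN
    omega
  rw [← (hper.nat_mul (k₀ + 1)) k, Nat.cast_id, hk, hfwd]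

theorem exists_exponential_of_map_zero_eq_one (hc : c ≠ 0)
    (hH : ∀ k x y, H k (x + c * y) = H (k + 1) y * H k x) (h1 : ∀ k, H k 0 = 1) :
    (∀ x y, H 0 (x + y) = H 0 x * H 0 y) ∧ ∀ k x, H k x = H 0 (c ^ k * x) := by
  have hshift : ∀ k y, H (k + 1) y = H k (c * y) := fun k y => by
    simpa [h1] using (hH k 0 y).symm
  refine ⟨fun x y => ?_, fun k => ?_⟩
  · rw [← mul_div_cancel₀ y hc, hH, ← hshift, mul_comm]
  · induction k with
    | zero => simp
    | succ k ih => intro x; rw [hshift, ih, pow_succ, mul_assoc]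

theorem exists_exponential_of_periodic (hc : c ≠ 0)
    (hH : ∀ k x y, H k (x + c * y) = H (k + 1) y * H k x) {N : ℕ} (hN : 0 < N)
    (hper : Function.Periodic H N) :
    ∃ h : K → K, (∀ x y, h (x + y) = h x * h y) ∧ ∀ k x, H k x = h (c ^ k * x) := by
  rcases forall_eq_zero_or_forall_map_zero_eq_one hH hN hper with h0 | h1
  · exact ⟨0, fun _ _ => by simp, fun k x => h0 k x⟩
  · exact ⟨H 0, exists_exponential_of_map_zero_eq_one hc hH h1⟩

end Chain

theorem Matrix.inv_diagonal_of_ne_zero {ι K : Type*} [Fintype ι] [DecidableEq ι] [Field K]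
    {v : ι → K} (hv : ∀ i, v i ≠ 0) : (Matrix.diagonal v)⁻¹ = Matrix.diagonal v⁻¹ :=
  Matrix.inv_eq_left_inv <| by
    rw [Matrix.diagonal_mul_diagonal, ← Matrix.diagonal_one]
    exact congrArg _ (funext fun i => inv_mul_cancel₀ (hv i))

theorem Matrix.diagonal_inv_pow_mul_mul_diagonal_pow_mul_apply {ι K : Type*} [Fintype ι]
    [DecidableEq ι] [Field K] {v : ι → K} (hv : ∀ i, v i ≠ 0) (A B : Matrix ι ι K) (m : ℕ)
    (i k : ι) :
    ((Matrix.diagonal v)⁻¹ ^ m * A * Matrix.diagonal v ^ m * B) i k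
      = ∑ p, (v p / v i) ^ m * A i p * B p k := by
  rw [Matrix.inv_diagonal_of_ne_zero hv, Matrix.diagonal_pow, Matrix.diagonal_pow, Matrix.mul_apply]
  refine Finset.sum_congr rfl fun p _ => ?_
  rw [Matrix.mul_diagonal, Matrix.diagonal_mul]
  simp only [Pi.pow_apply, Pi.inv_apply]
  ring

/-- Let `n ≥ 2`, let `m ∈ {0,…,n−1}` be fixed, let
`d = gcd(n,m)` (with `gcd(n,0) = n`), and let `F(x) = circ(f₀(x),…,f_{n−1}(x))`
be a circulant matrix function satisfying
`F(x + ω^m y) = Ω^(−m) F(y) Ω^m F(x)` for all `x, y ∈ ℂ`. Then there exist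
exponential functions `g₀, …, g_{d−1} : ℂ → ℂ` such that, defining
`g_{(r+km) mod n}(x) = g_r(ω^(km) x)` for `r ∈ {0,…,d−1}` and
`k ∈ {0,…,n/d−1}`, one has `f_j(x) = (1/n) Σ_{l=0}^{n−1} ω^(−jl) g_l(x)`
for every `j` and every `x`. -/
theorem general_solution_of_circulant_equation
    (n : ℕ) (hn : 2 ≤ n)
    (ω : ℂ) (hω : ω = Complex.exp (2 * Real.pi * Complex.I / n))
    (m : ℕ)
    (d : ℕ)
    (Om : Matrix (Fin n) (Fin n) ℂ)
    (hOm : Om = Matrix.diagonal fun j : Fin n => ω ^ (j : ℕ))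
    (f : Fin n → ℂ → ℂ)
    (F : ℂ → Matrix (Fin n) (Fin n) ℂ)
    (hF : ∀ (x : ℂ) (j k : Fin n), F x j k = f (k - j) x)
    (heq : ∀ x y : ℂ, F (x + ω ^ m * y) = Om⁻¹ ^ m * F y * Om ^ m * F x) :
    ∃ h : Fin d → ℂ → ℂ,
      (∀ r : Fin d, ∀ x y : ℂ, h r (x + y) = h r x * h r y) ∧
      ∃ g : Fin n → ℂ → ℂ,
        (∀ (r : Fin d) (k : ℕ), k < n / d → ∀ x : ℂ,
          g ⟨((r : ℕ) + k * m) % n, Nat.mod_lt _ (by omega)⟩ x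
            = h r (ω ^ (k * m) * x)) ∧
        (∀ (j : Fin n) (x : ℂ),
          f j x = (1 / n : ℂ) * ∑ l : Fin n,
            ω ^ (-((j : ℕ) * (l : ℕ) : ℤ)) * g l x) := by
  have : NeZero n := ⟨by omega⟩
  have hζ : IsPrimitiveRoot ω n := hω ▸ Complex.isPrimitiveRoot_exp n (NeZero.ne n)
  have hω0 : ω ≠ 0 := hζ.ne_zero (NeZero.ne n)
  have hrow : ∀ (x y : ℂ) (k : Fin n),
      f k (x + ω ^ m * y) = ∑ p : Fin n, ω ^ ((p : ℕ) * m) * f p y * f (k - p) x := by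
    intro x y k
    -- entry `(0, k)` of the matrix equation
    rw [← sub_zero k, ← hF, heq, hOm,
      Matrix.diagonal_inv_pow_mul_mul_diagonal_pow_mul_apply fun _ => pow_ne_zero _ hω0]
    simp [hF, ← pow_mul]
  set G : ℕ → ℂ → ℂ := fun l x => finDFT ω (f · x) l
  have hGmod : ∀ l, G (l % n) = G l := fun l => funext fun x => finDFT_mod hζ.pow_eq_one _ l
  have hG : ∀ l x y, G l (x + ω ^ m * y) = G (l + m) y * G l x := fun l x y => by
    have := finDFT_convolution hζ.pow_eq_one (fun p => ω ^ ((p : ℕ) * m) * f p y) (f · x) l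
    rw [finDFT_pow_mul] at this
    simpa only [G, ← hrow] using this
  have hchain : ∀ r : ℕ, ∃ h : ℂ → ℂ, (∀ x y, h (x + y) = h x * h y) ∧
      ∀ k x, G (r + k * m) x = h ((ω ^ m) ^ k * x) := fun r =>
    exists_exponential_of_periodic (H := fun k => G (r + k * m)) (pow_ne_zero m hω0)
      (fun k x y => by simpa [add_mul, add_assoc] using hG (r + k * m) x y)
      (Nat.pos_of_neZero n) fun k => by
        dsimp only
        rw [← hGmod, add_mul, ← add_assoc, Nat.add_mul_mod_self_left, hGmod]
  choose h hexp hh using hchain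
  refine ⟨fun r => h r, fun r => hexp r, fun l => G l, fun r k _ x => ?_,
    fun j x => finDFT_inversion hζ (f · x) j⟩
  show G ((r + k * m) % n) x = h r (ω ^ (k * m) * x)
  rw [hGmod, hh, ← pow_mul, mul_comm m]
end
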